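/- arXiv:2208.09241 — 3 statements merged into one kernel-verified Lean document; each statement's English description precedes it below -/
import Mathlib

section
/- Every connected simple graph G with at most two more edges than vertices (i.e., ‖G‖ − |G| ≤ 2) is planar. -/
/-- `H` is a minor of `G`: branch sets witness. -/
def IsMinorOf {α β : Type*} (H : SimpleGraph α) (G : SimpleGraph β) : Prop :=
  ∃ f : α → Set β,
    (∀ a, (f a).Nonempty) ∧
    (∀ a, (G.induce (f a)).Connected) ∧
    (Pairwise fun a b => Disjoint (f a) (f b)) ∧
    (∀ a b, H.Adj a b → ∃ u ∈ f a, ∃ v ∈ f b, G.Adj u v)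

/-- Planarity, via Wagner's characterization: no `K₅` and no `K₃,₃` minor. -/
def GraphIsPlanar {β : Type*} (G : SimpleGraph β) : Prop :=
  ¬ IsMinorOf (SimpleGraph.completeGraph (Fin 5)) G ∧
  ¬ IsMinorOf (completeBipartiteGraph (Fin 3) (Fin 3)) G

/-! If `H` is a minor of a connected graph `G` with branch sets `f a`, the edges of `G` split
into those inside a branch set (at least `|f a| - 1` of them per connected branch set), those
between two branch sets (at least one per edge of `H`), and those leaving the union `U` of the
branch sets (at least `|Uᶜ|`, since `U` can be grown to all of `G` one boundary edge at a time).
Hence `‖H‖ - |H| ≤ ‖G‖ - |G|`, whereas `‖K₅‖ - |K₅| = 5` and `‖K₃,₃‖ - |K₃,₃| = 3`. -/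

open Function SimpleGraph

namespace Set

variable {α ι : Type*}

theorem sym2_mono {s t : Set α} (h : s ⊆ t) : s.sym2 ⊆ t.sym2 := fun _ hz =>
  mem_sym2_iff_subset.mpr ((mem_sym2_iff_subset.mp hz).trans h)

theorem disjoint_sym2 {s t : Set α} (h : Disjoint s t) : Disjoint s.sym2 t.sym2 := by
  refine disjoint_left.mpr fun z hs ht => ?_
  induction z using Sym2.ind with
  | _ u v => exact disjoint_left.mp h hs.1 ht.1

theorem ncard_iUnion_of_pairwise_disjoint [Fintype ι] [Finite α] {s : ι → Set α}
    (h : Pairwise (Disjoint on s)) : (⋃ i, s i).ncard = ∑ i, (s i).ncard := by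
  rw [ncard_iUnion_of_finite (fun _ => toFinite _) h, finsum_eq_sum_of_fintype]

theorem exists_forall_mem_eq_of_pairwise_disjoint [Nonempty ι] {f : ι → Set α}
    (h : Pairwise (Disjoint on f)) : ∃ g : α → ι, ∀ i, ∀ x ∈ f i, g x = i := by
  classical
  refine ⟨fun x => if hx : ∃ i, x ∈ f i then hx.choose else Classical.arbitrary ι, ?_⟩
  intro i x hx
  have hx' : ∃ i, x ∈ f i := ⟨i, hx⟩
  simp only [hx', dif_pos]
  by_contra hne
  exact disjoint_left.mp (h hne) hx'.choose_spec hx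

end Set

namespace SimpleGraph

variable {V α : Type*} {G : SimpleGraph V}

theorem ncard_compl_le_ncard_edgeSet_diff_sym2 [Finite V] (hG : G.Preconnected) {S : Set V}
    (hS : S.Nonempty) : Sᶜ.ncard ≤ (G.edgeSet \ S.sym2).ncard := by
  induction hn : Sᶜ.ncard generalizing S with
  | zero => exact Nat.zero_le _
  | succ n ih =>
    obtain ⟨u, hu⟩ := hS
    obtain ⟨w, hw⟩ := Set.nonempty_of_ncard_ne_zero (s := Sᶜ) (by omega)
    obtain ⟨d, -, hd, hd'⟩ := (hG u w).some.exists_boundary_dart S hu hw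
    have hn' : (insert d.snd S)ᶜ.ncard = n := by
      rw [show (insert d.snd S)ᶜ = Sᶜ \ {d.snd} by ext; simp [and_comm],
        Set.ncard_sdiff_singleton_of_mem hd', hn, Nat.add_sub_cancel]
    have hlt : G.edgeSet \ (insert d.snd S).sym2 ⊂ G.edgeSet \ S.sym2 :=
      (Set.ssubset_iff_of_subset (Set.sdiff_subset_sdiff_right
        (Set.sym2_mono (Set.subset_insert _ _)))).mpr
        ⟨d.edge, ⟨d.edge_mem, by simp [Dart.edge, hd']⟩, fun h => h.2 (by simp [Dart.edge, hd])⟩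
    exact (ih (Set.insert_nonempty _ _) hn').trans_lt (Set.ncard_lt_ncard hlt)

theorem ncard_le_ncard_edgeSet_inter_sym2_add_one [Finite V] {s : Set V}
    (hs : (G.induce s).Connected) : s.ncard ≤ (G.edgeSet ∩ s.sym2).ncard + 1 := by
  have h := hs.card_vert_le_card_edgeSet_add_one
  rw [Nat.card_coe_set_eq, Nat.card_coe_set_eq,
    ← Set.ncard_image_of_injective _ (Sym2.map.injective Subtype.val_injective)] at h
  refine h.trans (add_le_add_left (Set.ncard_le_ncard ?_) 1)
  rintro _ ⟨e, he, rfl⟩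
  induction e using Sym2.ind with
  | _ u v => exact ⟨he, u.2, v.2⟩

theorem ncard_edgeSet_le_ncard_edgeSet_diff_iUnion [Finite V] {H : SimpleGraph α}
    {f : α → Set V} {g : V → α} (hg : ∀ a, ∀ x ∈ f a, g x = a)
    (hadj : ∀ a b, H.Adj a b → ∃ u ∈ f a, ∃ v ∈ f b, G.Adj u v) :
    H.edgeSet.ncard ≤ ((G.edgeSet ∩ (⋃ a, f a).sym2) \ ⋃ a, G.edgeSet ∩ (f a).sym2).ncard := by
  refine (Set.ncard_le_ncard (t := Sym2.map g '' _) ?_).trans (Set.ncard_image_le (Set.toFinite _))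
  intro e he
  induction e using Sym2.ind with
  | _ a b =>
    obtain ⟨u, hu, v, hv, huv⟩ := hadj a b he
    refine ⟨s(u, v), ⟨⟨huv, Set.mem_iUnion_of_mem a hu, Set.mem_iUnion_of_mem b hv⟩, ?_⟩,
      by simp [hg a u hu, hg b v hv]⟩
    simp only [Set.mem_iUnion, Set.mem_inter_iff, Set.mk_mem_sym2_iff, not_exists, not_and]
    rintro c - hu' hv'
    exact he.ne (by rw [← hg a u hu, ← hg b v hv, hg c u hu', hg c v hv'])

theorem ncard_edgeSet_completeGraph [Finite V] :
    (completeGraph V).edgeSet.ncard = (Nat.card V).choose 2 := by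
  classical
  have := Fintype.ofFinite V
  rw [← coe_edgeFinset, Set.ncard_coe_finset, card_edgeFinset_top_eq_card_choose_two,
    Nat.card_eq_fintype_card]

theorem ncard_edgeSet_completeBipartiteGraph {W₁ W₂ : Type*} [Finite W₁] [Finite W₂] :
    (completeBipartiteGraph W₁ W₂).edgeSet.ncard = Nat.card W₁ * Nat.card W₂ := by
  have := Fintype.ofFinite W₁
  have := Fintype.ofFinite W₂
  simp [Set.ncard, encard_edgeSet_completeBipartiteGraph, ENat.card_eq_coe_fintype_card]

end SimpleGraph

theorem IsMinorOf.card_add_ncard_edgeSet_le {α V : Type*} [Fintype α] [Nonempty α] [Finite V]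
    {H : SimpleGraph α} {G : SimpleGraph V} (hHG : IsMinorOf H G) (hG : G.Connected) :
    Nat.card V + H.edgeSet.ncard ≤ G.edgeSet.ncard + Fintype.card α := by
  obtain ⟨f, hne, hconn, hdisj, hadj⟩ := hHG
  obtain ⟨g, hg⟩ := Set.exists_forall_mem_eq_of_pairwise_disjoint hdisj
  set U := ⋃ a, f a
  set D := ⋃ a, G.edgeSet ∩ (f a).sym2
  have hV : Nat.card V = ∑ a, (f a).ncard + Uᶜ.ncard := by
    rw [← Set.ncard_iUnion_of_pairwise_disjoint hdisj, Set.ncard_add_ncard_compl]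
  have hD : ∑ a, (f a).ncard ≤ D.ncard + Fintype.card α := by
    rw [Set.ncard_iUnion_of_pairwise_disjoint
      fun a b hab => ((Set.disjoint_sym2 (hdisj hab)).inter_left' _).inter_right' _]
    calc ∑ a, (f a).ncard ≤ ∑ a, ((G.edgeSet ∩ (f a).sym2).ncard + 1) :=
          Finset.sum_le_sum fun a _ => ncard_le_ncard_edgeSet_inter_sym2_add_one (hconn a)
      _ = _ := by
          rw [Finset.sum_add_distrib, Finset.sum_const, Finset.card_univ, smul_eq_mul, mul_one]
  have hX : H.edgeSet.ncard ≤ ((G.edgeSet ∩ U.sym2) \ D).ncard :=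
    ncard_edgeSet_le_ncard_edgeSet_diff_iUnion hg hadj
  have hY : Uᶜ.ncard ≤ (G.edgeSet \ U.sym2).ncard :=
    ncard_compl_le_ncard_edgeSet_diff_sym2 hG.preconnected
      ((hne (Classical.arbitrary α)).mono (Set.subset_iUnion f _))
  have hDU : D ⊆ G.edgeSet ∩ U.sym2 := Set.iUnion_subset fun a =>
    Set.inter_subset_inter_right _ (Set.sym2_mono (Set.subset_iUnion f a))
  have hE := Set.ncard_inter_add_ncard_sdiff_eq_ncard G.edgeSet U.sym2
  have hE' := Set.ncard_sdiff_add_ncard_of_subset hDU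
  omega

/-- Every connected simple graph with `‖G‖ - |G| ≤ 2` is planar. -/
theorem stmt0 {V : Type} [Fintype V] (G : SimpleGraph V)
    (hconn : G.Connected) (h : G.edgeSet.ncard ≤ Fintype.card V + 2) :
    GraphIsPlanar G := by
  constructor
  · intro hK
    have := hK.card_add_ncard_edgeSet_le hconn
    rw [ncard_edgeSet_completeGraph, Nat.card_fin, Nat.choose_two_right, Fintype.card_fin,
      Nat.card_eq_fintype_card] at this
    omega
  · intro hK
    have := hK.card_add_ncard_edgeSet_le hconn
    rw [ncard_edgeSet_completeBipartiteGraph, Nat.card_fin, Fintype.card_sum, Fintype.card_fin,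
      Nat.card_eq_fintype_card] at this
    omega
end

section
/- For odd n ≥ 3, the Möbius ladder M_n is non-planar. -/
/-- The Möbius ladder `Mₙ`: a cycle of length `2n` together with the `n` chords
joining opposite vertices. -/
def mobiusLadder (n : ℕ) : SimpleGraph (ZMod (2 * n)) :=
  SimpleGraph.fromRel (fun i j => j = i + 1 ∨ j = i + (n : ZMod (2 * n)))

namespace SimpleGraph

variable {V : Type*} {G : SimpleGraph V}

theorem induce_image_Icc_connected (f : ℤ → V) {a b : ℤ} (hab : a ≤ b)
    (hf : ∀ k ∈ Set.Ico a b, G.Adj (f k) (f (k + 1))) :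
    (G.induce (f '' Set.Icc a b)).Connected := by
  have hmem : ∀ k ∈ Set.Icc a b, f k ∈ f '' Set.Icc a b := fun k hk => ⟨k, hk, rfl⟩
  have ha : a ∈ Set.Icc a b := ⟨le_rfl, hab⟩
  have reach : ∀ k (hk : k ∈ Set.Icc a b),
      (G.induce (f '' Set.Icc a b)).Reachable ⟨f a, hmem a ha⟩ ⟨f k, hmem k hk⟩ := by
    rintro k ⟨hak, hkb⟩
    induction k, hak using Int.leInduction with
    | base => rfl
    | succ k hak ih =>
      exact (ih (by omega)).trans (Adj.reachable (hf k ⟨hak, by omega⟩))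
  rw [connected_iff]
  refine ⟨?_, ⟨_, hmem a ha⟩⟩
  rintro ⟨_, k, hk, rfl⟩ ⟨_, l, hl, rfl⟩
  exact (reach k hk).symm.trans (reach l hl)

end SimpleGraph

theorem isMinorOf_completeBipartiteGraph {α β V : Type*} {G : SimpleGraph V}
    (F : α ⊕ β → Set V) (hconn : ∀ x, (G.induce (F x)).Connected)
    (hdisj : Pairwise fun x y => Disjoint (F x) (F y))
    (hadj : ∀ a b, ∃ u ∈ F (.inl a), ∃ v ∈ F (.inr b), G.Adj u v) :
    IsMinorOf (completeBipartiteGraph α β) G := by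
  refine ⟨F, fun x => ?_, hconn, hdisj, ?_⟩
  · obtain ⟨⟨v, hv⟩⟩ := (hconn x).nonempty
    exact ⟨v, hv⟩
  · rintro (a | a) (b | b) hab
    · simp at hab
    · exact hadj a b
    · obtain ⟨u, hu, v, hv, huv⟩ := hadj b a
      exact ⟨v, hv, u, hu, huv.symm⟩
    · simp at hab

theorem ZMod.disjoint_intCast_image_Icc {m : ℕ} {a b c d : ℤ} (hbc : b < c) (hda : d - a < m) :
    Disjoint ((Int.cast : ℤ → ZMod m) '' Set.Icc a b) (Int.cast '' Set.Icc c d) := by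
  rw [Set.disjoint_left]
  rintro _ ⟨k, hk, rfl⟩ ⟨l, hl, hlk⟩
  rw [ZMod.intCast_eq_intCast_iff] at hlk
  have := Int.eq_zero_of_abs_lt_dvd hlk.dvd (abs_lt.mpr ⟨by grind, by grind⟩)
  grind

theorem mobiusLadder_adj_add_one (n : ℕ) (i : ZMod (2 * n)) :
    (mobiusLadder n).Adj i (i + 1) := by
  refine (SimpleGraph.fromRel_adj _ _ _).mpr ⟨fun h => ?_, .inl (.inl rfl)⟩
  have h1 : ((1 : ℕ) : ZMod (2 * n)) = 0 := by simpa using h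
  rw [ZMod.natCast_eq_zero_iff, Nat.dvd_one] at h1
  omega

theorem mobiusLadder_adj_add_natCast {n : ℕ} (hn : n ≠ 0) (i : ZMod (2 * n)) :
    (mobiusLadder n).Adj i (i + n) := by
  refine (SimpleGraph.fromRel_adj _ _ _).mpr ⟨fun h => ?_, .inl (.inr rfl)⟩
  have hn' : (n : ZMod (2 * n)) = 0 := by simpa using h
  rw [ZMod.natCast_eq_zero_iff] at hn'
  exact hn (Nat.eq_zero_of_dvd_of_lt hn' (by omega))

theorem mobiusLadder_induce_intCast_image_Icc_connected (n : ℕ) {a b : ℤ} (hab : a ≤ b) :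
    ((mobiusLadder n).induce (Int.cast '' Set.Icc a b)).Connected :=
  SimpleGraph.induce_image_Icc_connected _ hab fun k _ => by
    simpa using mobiusLadder_adj_add_one n k

/-- The rim arcs `[2 - n, -1], {0}, {1}, [2, n - 1], {n}, {n + 1}` in cyclic order (`n + 1` is
adjacent to `2 - n` modulo `2n`); the rungs used are `0 ~ n`, `1 ~ n + 1` and `2 ~ 2 - n`. -/
def mobiusLadderK33Branch (n : ℕ) : Fin 3 ⊕ Fin 3 → Set (ZMod (2 * n)) :=
  Sum.elim
    ![Int.cast '' Set.Icc 0 0, Int.cast '' Set.Icc 2 (n - 1), Int.cast '' Set.Icc (n + 1) (n + 1)]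
    ![Int.cast '' Set.Icc 1 1, Int.cast '' Set.Icc n n, Int.cast '' Set.Icc (2 - n) (-1)]

theorem mobiusLadderK33Branch_connected {n : ℕ} (hn : 3 ≤ n) (x : Fin 3 ⊕ Fin 3) :
    ((mobiusLadder n).induce (mobiusLadderK33Branch n x)).Connected := by
  rcases x with a | a <;> fin_cases a <;>
    exact mobiusLadder_induce_intCast_image_Icc_connected n (by omega)

theorem mobiusLadderK33Branch_pairwise_disjoint {n : ℕ} (hn : 3 ≤ n) :
    Pairwise fun x y => Disjoint (mobiusLadderK33Branch n x) (mobiusLadderK33Branch n y) := by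
  rintro (a | a) (b | b) hab <;> fin_cases a <;> fin_cases b <;>
    first
      | exact absurd rfl hab
      | exact ZMod.disjoint_intCast_image_Icc (by omega) (by push_cast; omega)
      | exact (ZMod.disjoint_intCast_image_Icc (by omega) (by push_cast; omega)).symm

theorem mobiusLadderK33Branch_exists_adj {n : ℕ} (hn : 3 ≤ n) (a b : Fin 3) :
    ∃ u ∈ mobiusLadderK33Branch n (.inl a), ∃ v ∈ mobiusLadderK33Branch n (.inr b),
      (mobiusLadder n).Adj u v := by
  have edge : ∀ {a b c d : ℤ} (u v : ℤ), u ∈ Set.Icc a b → v ∈ Set.Icc c d →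
      (mobiusLadder n).Adj u v →
      ∃ x ∈ (Int.cast '' Set.Icc a b : Set (ZMod (2 * n))), ∃ y ∈ Int.cast '' Set.Icc c d,
        (mobiusLadder n).Adj x y :=
    fun u v hu hv h => ⟨_, ⟨u, hu, rfl⟩, _, ⟨v, hv, rfl⟩, h⟩
  have rim (k : ℤ) : (mobiusLadder n).Adj (k : ZMod (2 * n)) ((k + 1 : ℤ) : ZMod (2 * n)) := by
    simpa using mobiusLadder_adj_add_one n k
  have rung (k : ℤ) : (mobiusLadder n).Adj (k : ZMod (2 * n)) ((k + n : ℤ) : ZMod (2 * n)) := by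
    simpa using mobiusLadder_adj_add_natCast (by omega) k
  have wrap : ((n + 1 + 1 : ℤ) : ZMod (2 * n)) = ((2 - n : ℤ) : ZMod (2 * n)) := by
    have h2n := ZMod.natCast_self (2 * n)
    push_cast at h2n ⊢
    linear_combination h2n
  fin_cases a <;> fin_cases b
  · exact edge 0 1 (by simp) (by simp) (rim 0)
  · exact edge 0 n (by simp) (by simp) (by simpa using rung 0)
  · exact edge 0 (-1) (by simp) (by simp; omega) (by simpa using (rim (-1)).symm)
  · exact edge 2 1 (by simp; omega) (by simp) (by simpa using (rim 1).symm)
  · exact edge (n - 1) n (by simp; omega) (by simp) (by simpa using rim (n - 1))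
  · exact edge 2 (2 - n) (by simp; omega) (by simp; omega) (by simpa using (rung (2 - n)).symm)
  · exact edge (n + 1) 1 (by simp) (by simp) (by simpa [add_comm] using (rung 1).symm)
  · exact edge (n + 1) n (by simp) (by simp) (by simpa using (rim n).symm)
  · exact edge (n + 1) (2 - n) (by simp) (by simp; omega) (wrap ▸ rim (n + 1))

theorem completeBipartiteGraph_isMinorOf_mobiusLadder {n : ℕ} (hn : 3 ≤ n) :
    IsMinorOf (completeBipartiteGraph (Fin 3) (Fin 3)) (mobiusLadder n) :=
  isMinorOf_completeBipartiteGraph _ (mobiusLadderK33Branch_connected hn)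
    (mobiusLadderK33Branch_pairwise_disjoint hn) (mobiusLadderK33Branch_exists_adj hn)

theorem stmt8_general (n : ℕ) (hn : 3 ≤ n) :
    ¬ GraphIsPlanar (mobiusLadder n) :=
  fun h => h.2 (completeBipartiteGraph_isMinorOf_mobiusLadder hn)

/-- For odd `n ≥ 3`, the Möbius ladder `Mₙ` is non-planar. -/
theorem stmt8 (n : ℕ) (hn : 3 ≤ n) (hodd : Odd n) :
    ¬ GraphIsPlanar (mobiusLadder n) :=
  stmt8_general n hn
end

section
/- The only graph automorphism of the graph 12⁸₁ is the identity. -/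
/-!
Every automorphism preserves degrees, hence also the sum of the degrees of the neighbours
of a vertex. On `12⁸₁` this sum already separates all vertices: it takes the values
`w ↦ 4, v ↦ 7, b₁ ↦ 9, a₃ ↦ 10, b₃ ↦ 11, a₂ ↦ 12, a₁ ↦ 13, b₂ ↦ 14`.
-/

/-- The vertices of the graph `12⁸₁`. -/
inductive V81 : Type
  | a1 | a2 | a3 | b1 | b2 | b3 | v | w
  deriving DecidableEq

open V81 in
instance instFintypeV81 : Fintype V81 where
  elems := {a1, a2, a3, b1, b2, b3, v, w}
  complete := by intro x; cases x <;> first | decide | simp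

open V81 in
/-- The graph `12⁸₁`: the 6-cycle `a₁a₂a₃b₁b₂b₃a₁`, the chords `a₂b₂`, `a₃b₃`, the
edge `a₁b₂`, the edges `va₁`, `vb₁`, and the pendant edge `wa₂` (12 edges in all;
the chord `a₁b₁` of the Möbius ladder arises through the degree-2 vertex `v`). -/
def graph1281 : SimpleGraph V81 :=
  SimpleGraph.fromRel (fun x y => (x, y) ∈
    [(a1, a2), (a2, a3), (a3, b1), (b1, b2), (b2, b3), (b3, a1),
     (a2, b2), (a3, b3), (a1, b2), (v, a1), (v, b1), (w, a2)])

instance : DecidableRel graph1281.Adj := fun x y =>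
  decidable_of_iff _ (SimpleGraph.fromRel_adj _ x y).symm

namespace SimpleGraph

variable {V W : Type*} {G : SimpleGraph V} {G' : SimpleGraph W}

def neighborDegreeSum (G : SimpleGraph V) [G.LocallyFinite] (x : V) : ℕ :=
  ∑ y ∈ G.neighborFinset x, G.degree y

theorem Iso.neighborDegreeSum_eq [G.LocallyFinite] [G'.LocallyFinite] (φ : G ≃g G') (x : V) :
    G'.neighborDegreeSum (φ x) = G.neighborDegreeSum x := by
  refine (Finset.sum_equiv φ.toEquiv (fun y => ?_) fun y _ => (φ.degree_eq y).symm).symm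
  simpa using φ.map_adj_iff.symm

theorem Iso.apply_eq_self_of_injective_neighborDegreeSum [G.LocallyFinite] (φ : G ≃g G)
    (h : Function.Injective G.neighborDegreeSum) (x : V) : φ x = x :=
  h (φ.neighborDegreeSum_eq x)

end SimpleGraph

theorem neighborDegreeSum_graph1281_injective :
    Function.Injective graph1281.neighborDegreeSum := by
  decide

/-- The only graph automorphism of `12⁸₁` is the identity. -/
theorem stmt12 (φ : graph1281 ≃g graph1281) : ∀ x, φ x = x :=
  φ.apply_eq_self_of_injective_neighborDegreeSum neighborDegreeSum_graph1281_injective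
end
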